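/- Let R be a commutative ring, a ⊆ R an ideal, p a prime, and G a finite p-group of order p^r. Let I_G be the augmentation ideal of the group algebra R[G], i.e., the kernel of the R-algebra map R[G] → R sending every g ∈ G to 1. If x ∈ a·R[G] + I_G, then x^{p^r} lies in the two-sided ideal of R[G] generated by p and a. -/

import Mathlib

/-!
Reduce modulo `J = a + (p)`. In `(R ⧸ J)[G]` the prime `p` vanishes and the image of `x` lies in
the augmentation ideal, so it suffices to show that `y ^ p ^ r = 0` for every `y` of augmentation
zero. Induct on `r`: a central element `z` of order `p` exists, the kernel of
`R[G] → R[G ⧸ ⟨z⟩]` lies in the left ideal generated by the central element `z - 1`, and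
`(z - 1) ^ p = z ^ p - 1 = 0` because `p = 0`. Hence `y ^ p ^ r = u * (z - 1)` by induction and
`y ^ p ^ (r + 1) = u ^ p * (z - 1) ^ p = 0`. Back in `R[G]`, an element with all coefficients in
`J` lies in the ideal generated by the image of `J`, which is the span of `p` and `a`.
-/

open MonoidAlgebra Subgroup

theorem Subgroup.normal_of_le_center {G : Type*} [Group G] {H : Subgroup G} (hH : H ≤ center G) :
    H.Normal :=
  ⟨fun n hn g ↦ by rwa [mem_center_iff.mp (hH hn) g, mul_inv_cancel_right]⟩

theorem IsPGroup.exists_mem_center_orderOf_eq {G : Type*} [Group G] {p n : ℕ} [Fact p.Prime]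
    (hG : Nat.card G = p ^ n) (hn : n ≠ 0) : ∃ z ∈ center G, orderOf z = p := by
  have : Finite G := Nat.finite_of_card_ne_zero (hG ▸ pow_ne_zero _ (Fact.out : p.Prime).ne_zero)
  obtain ⟨k, hk, hcard⟩ := IsPGroup.card_center_eq_prime_pow hG (Nat.pos_of_ne_zero hn)
  obtain ⟨z, hz⟩ := exists_prime_orderOf_dvd_card' (G := center G) p
    (hcard ▸ dvd_pow_self p hk.ne')
  exact ⟨z, z.2, by rw [← hz, orderOf_submonoid]⟩

theorem Subgroup.card_quotient_zpowers {G : Type*} [Group G] {p r : ℕ} (hp : 0 < p) {z : G}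
    (hG : Nat.card G = p ^ (r + 1)) (hz : orderOf z = p) : Nat.card (G ⧸ zpowers z) = p ^ r := by
  have := card_eq_card_quotient_mul_card_subgroup (zpowers z)
  rw [Nat.card_zpowers, hz, hG, pow_succ] at this
  exact (Nat.eq_of_mul_eq_mul_right hp this).symm

theorem sub_one_pow_prime_eq_zero {A : Type*} [Ring A] {p : ℕ} (hp : p.Prime) (hpA : (p : A) = 0)
    {a : A} (ha : a ^ p = 1) : (a - 1) ^ p = 0 := by
  obtain ⟨c, hc⟩ := (Commute.one_right (a - 1)).exists_add_pow_prime_eq hp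
  rw [sub_add_cancel, ha, hpA, one_pow] at hc
  simpa using hc

namespace MonoidAlgebra

theorem mapDomain_comp {R M N O : Type*} [Semiring R] (f : M → N) (g : N → O) (x : R[M]) :
    mapDomain (g ∘ f) x = mapDomain g (mapDomain f x) := by
  ext; simp [mapDomain, Finsupp.mapDomain_comp]

section Kernel

variable {R : Type*} [Ring R] {G : Type*} [Group G]

theorem mem_span_of_sub_one_of_mapDomain_mk_eq_zero (H : Subgroup G) {x : R[G]}
    (hx : mapDomain (QuotientGroup.mk : G → G ⧸ H) x = 0) :
    x ∈ Ideal.span (Set.range fun h : H ↦ of R G h - 1) := by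
  -- `σ` picks coset representatives; it factors through `G ⧸ H`, so `σ x = 0`.
  set σ : G → G := fun g ↦ (g : G ⧸ H).out
  have hσ : ∀ g, ∃ h : H, σ g = g * h := fun g ↦
    ⟨⟨g⁻¹ * σ g, QuotientGroup.eq.mp (QuotientGroup.out_eq' _).symm⟩, by simp⟩
  have hsub (y : R[G]) :
      y - mapDomain σ y ∈ Ideal.span (Set.range fun h : H ↦ of R G h - 1) := by
    induction y using induction_linear with
    | zero => simp
    | add y₁ y₂ h₁ h₂ =>
      rw [mapDomain_add, add_sub_add_comm]
      exact add_mem h₁ h₂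
    | single g c =>
      obtain ⟨h, hh⟩ := hσ g
      have : single g c - single (g * h) c = -(single g c * (of R G h - 1)) := by
        rw [of_apply, mul_sub, single_mul_single, mul_one, mul_one]; abel
      rw [mapDomain_single, hh, this]
      exact neg_mem (Ideal.mul_mem_left _ _ (Ideal.subset_span ⟨h, rfl⟩))
  have hσx : mapDomain σ x = 0 := by
    rw [show σ = Quotient.out ∘ QuotientGroup.mk from rfl, mapDomain_comp, hx, mapDomain_zero]
  simpa [hσx] using hsub x

theorem of_sub_one_mem_span_of_mem_zpowers {z g : G} (hz : IsOfFinOrder z) (hg : g ∈ zpowers z) :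
    of R G g - 1 ∈ Ideal.span {of R G z - 1} := by
  obtain ⟨k, rfl⟩ := hz.mem_powers_iff_mem_zpowers.mpr hg
  rw [map_pow, ← geom_sum_mul]
  exact Ideal.mul_mem_left _ _ (Ideal.subset_span rfl)

theorem mem_span_of_sub_one_of_mapDomain_mk_zpowers_eq_zero {z : G} (hz : IsOfFinOrder z)
    {x : R[G]} (hx : mapDomain (QuotientGroup.mk : G → G ⧸ zpowers z) x = 0) :
    x ∈ Ideal.span {of R G z - 1} :=
  Ideal.span_le.mpr (by rintro _ ⟨h, rfl⟩; exact of_sub_one_mem_span_of_mem_zpowers hz h.2)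
    (mem_span_of_sub_one_of_mapDomain_mk_eq_zero _ hx)

end Kernel

section Augmentation

variable {R : Type*} [CommRing R]

theorem lift_one_mapDomainRingHom {G H : Type*} [Monoid G] [Monoid H] (f : G →* H) (x : R[G]) :
    lift R R H 1 (mapDomainRingHom R f x) = lift R R G 1 x := by
  induction x using induction_linear with
  | zero => simp
  | add x y hx hy => rw [map_add, map_add, map_add, hx, hy]
  | single g c => simp [lift_single]

theorem lift_one_mapRingHom {S G : Type*} [CommRing S] [Monoid G] (f : R →+* S) (x : R[G]) :
    lift S S G 1 (mapRingHom G f x) = f (lift R R G 1 x) := by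
  induction x using induction_linear with
  | zero => simp
  | add x y hx hy => simp [hx, hy]
  | single g c => simp [lift_single]

theorem eq_algebraMap_lift_one {G : Type*} [Monoid G] [Subsingleton G] (x : R[G]) :
    x = algebraMap R R[G] (lift R R G 1 x) := by
  induction x using induction_linear with
  | zero => simp
  | add x y hx hy => rw [map_add, map_add, ← hx, ← hy]
  | single g c => simp [lift_single, Subsingleton.elim g 1]

theorem lift_one_mem_of_mem_map_sup_ker {G : Type*} [Monoid G] {a : Ideal R} {x : R[G]}
    (hx : x ∈ a.map (algebraMap R R[G]) ⊔ RingHom.ker (lift R R G 1 : R[G] →ₐ[R] R)) :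
    lift R R G 1 x ∈ a := by
  have hle : a.map (algebraMap R R[G]) ⊔ RingHom.ker (lift R R G 1 : R[G] →ₐ[R] R) ≤
      a.comap (lift R R G 1 : R[G] →ₐ[R] R) :=
    sup_le (Ideal.map_le_iff_le_comap.mpr fun c hc ↦ by simpa using hc)
      fun y hy ↦ by simp_all
  exact hle hx

theorem mem_map_algebraMap_of_forall_coeff_mem {G : Type*} [Monoid G] {I : Ideal R} {x : R[G]}
    (hx : ∀ g, x.coeff g ∈ I) : x ∈ I.map (algebraMap R R[G]) := by
  rw [← x.sum_coeff_single]
  refine Ideal.sum_mem _ fun g _ ↦ ?_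
  have : single g (x.coeff g) = of R G g * algebraMap R R[G] (x.coeff g) := by
    simp [single_mul_single]
  rw [this]
  exact Ideal.mul_mem_left _ _ (Ideal.mem_map_of_mem _ (hx g))

theorem pow_card_eq_zero_of_lift_one_eq_zero {p : ℕ} (hp : p.Prime) (hpR : (p : R) = 0) (r : ℕ)
    {G : Type*} [Group G] (hG : Nat.card G = p ^ r) {x : R[G]} (hx : lift R R G 1 x = 0) :
    x ^ p ^ r = 0 := by
  induction r generalizing G with
  | zero =>
    have : Subsingleton G := (Nat.card_eq_one_iff_unique.mp hG).1
    rw [eq_algebraMap_lift_one x, hx, map_zero, zero_pow (pow_ne_zero _ hp.ne_zero)]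
  | succ r ih =>
    have : Fact p.Prime := ⟨hp⟩
    obtain ⟨z, hz, hzp⟩ := IsPGroup.exists_mem_center_orderOf_eq hG r.succ_ne_zero
    have : (zpowers z).Normal := normal_of_le_center (zpowers_le.mpr hz)
    have hφ : mapDomainRingHom R (QuotientGroup.mk' (zpowers z)) (x ^ p ^ r) = 0 := by
      rw [map_pow]
      exact ih (card_quotient_zpowers hp.pos hG hzp) (by rwa [lift_one_mapDomainRingHom])
    obtain ⟨u, hu⟩ := Ideal.mem_span_singleton'.mp <|
      mem_span_of_sub_one_of_mapDomain_mk_zpowers_eq_zero (orderOf_pos_iff.mp (hzp ▸ hp.pos)) hφ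
    have hcomm : Commute u (of R G z - 1) :=
      ((of_commute (fun g ↦ (mem_center_iff.mp hz g).symm) u).sub_left (.one_left u)).symm
    have hpG : (p : R[G]) = 0 := by rw [← map_natCast (algebraMap R R[G]), hpR, map_zero]
    have hzG : of R G z ^ p = 1 := by rw [← map_pow, ← hzp, pow_orderOf_eq_one, map_one]
    rw [pow_succ, pow_mul, ← hu, hcomm.mul_pow, sub_one_pow_prime_eq_zero hp hpG hzG, mul_zero]

end Augmentation

end MonoidAlgebra

/-- Let `R` be a commutative ring, `a ⊆ R` an ideal, `p` a prime, and `G` a finite `p`-group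
of order `p ^ r`.  Let `I_G` be the augmentation ideal of the group algebra `R[G]`, the
kernel of the `R`-algebra map `R[G] → R` sending every `g ∈ G` to `1`.  If
`x ∈ a·R[G] + I_G`, then `x ^ (p ^ r)` lies in the (two-sided) ideal of `R[G]` generated by
`p` and `a`. -/
theorem pow_card_mem_span_p_sup (p r : ℕ) (hp : p.Prime)
    (G : Type*) [Group G] [Fintype G] (hG : Fintype.card G = p ^ r)
    (R : Type*) [CommRing R] (a : Ideal R)
    (x : MonoidAlgebra R G)
    (hx : x ∈ Ideal.map (algebraMap R (MonoidAlgebra R G)) a ⊔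
      RingHom.ker
        ((MonoidAlgebra.lift R R G 1 : MonoidAlgebra R G →ₐ[R] R) : MonoidAlgebra R G →+* R)) :
    x ^ (p ^ r) ∈ Ideal.span
      (insert ((p : ℕ) : MonoidAlgebra R G) ((algebraMap R (MonoidAlgebra R G)) '' (a : Set R))) := by
  set J := a ⊔ Ideal.span {(p : R)}
  set π := mapRingHom G (Ideal.Quotient.mk J)
  have hpJ : (p : R ⧸ J) = 0 :=
    Ideal.Quotient.eq_zero_iff_mem.mpr (Ideal.mem_sup_right (Ideal.mem_span_singleton_self _))
  have hπx : lift (R ⧸ J) (R ⧸ J) G 1 (π x) = 0 := by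
    rw [lift_one_mapRingHom, Ideal.Quotient.eq_zero_iff_mem]
    exact Ideal.mem_sup_left (lift_one_mem_of_mem_map_sup_ker hx)
  have hπxp : π (x ^ p ^ r) = 0 := by
    rw [map_pow]
    exact pow_card_eq_zero_of_lift_one_eq_zero hp hpJ r
      (by rw [Nat.card_eq_fintype_card, hG]) hπx
  have hJ : J.map (algebraMap R R[G]) =
      Ideal.span (insert (p : R[G]) (algebraMap R R[G] '' a)) := by
    rw [Ideal.map_sup, Ideal.map_span, Set.image_singleton, map_natCast, Ideal.span_insert,
      Ideal.map, sup_comm]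
  rw [← hJ]
  refine mem_map_algebraMap_of_forall_coeff_mem fun g ↦ ?_
  rw [← Ideal.Quotient.eq_zero_iff_mem, ← coeff_mapRingHom, hπxp, coeff_zero, Finsupp.coe_zero,
    Pi.zero_apply]
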